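/- Let d = (1, 2, …, q−1, q, q^{(s_q)}, (q−1)^{(s_{q−1})}, …, 1^{(s_1)}) be the diagonal sequence of some partition of n. If s_i ≥ 2 for all 1 ≤ i < q, then there is exactly one partition α of n with δ(α) = d having exactly q (nonzero) parts. -/

import Mathlib

/-- The `i`-th part (1-indexed) of a partition given as a list of parts; `0` beyond the end. -/
def part (α : List ℕ) (i : ℕ) : ℕ := α.getD (i - 1) 0

/-- `α` is a partition of `n`: a nonincreasing list of positive integers summing to `n`. -/
def IsPartition (n : ℕ) (α : List ℕ) : Prop :=
  α.Pairwise (· ≥ ·) ∧ (∀ x ∈ α, 0 < x) ∧ α.sum = n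

/-- The `k`-th entry of the diagonal sequence of `α`:
`d_k = |{i : 1 ≤ i ≤ k and α_i + i - 1 ≥ k}|`. -/
def diag (α : List ℕ) (k : ℕ) : ℕ :=
  ((Finset.Icc 1 k).filter (fun i => k ≤ part α i + i - 1)).card

/-- The sequence `(1, 2, …, q-1, q, q^{(s_q)}, (q-1)^{(s_{q-1})}, …, 1^{(s_1)})` as a list,
where `s i` is the multiplicity of the entry `i` in the tail. -/
def stairSeq (q : ℕ) (s : ℕ → ℕ) : List ℕ :=
  (List.range q).map (· + 1) ++
    (List.range q).reverse.flatMap fun j => List.replicate (s (j + 1)) (j + 1)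

/-- `ᾱ_i = q - i + 1 + ∑_{k=i}^{q} s_k`. -/
def abar (q : ℕ) (s : ℕ → ℕ) (i : ℕ) : ℕ := q - i + 1 + ∑ k ∈ Finset.Icc i q, s k

/-- The list `ᾱ = (ᾱ_1, …, ᾱ_q)`. -/
def abarList (q : ℕ) (s : ℕ → ℕ) : List ℕ := (List.range q).map fun j => abar q s (j + 1)

def Kv (q : ℕ) (s : ℕ → ℕ) (m : ℕ) : ℕ := q + ∑ j ∈ Finset.Icc m q, s j

lemma Kv_ge (q : ℕ) (s : ℕ → ℕ) (m : ℕ) : q ≤ Kv q s m := Nat.le_add_right _ _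

lemma Kv_anti (q : ℕ) (s : ℕ → ℕ) {a b : ℕ} (hab : a ≤ b) : Kv q s b ≤ Kv q s a := by
  unfold Kv
  exact Nat.add_le_add_left (Finset.sum_le_sum_of_subset
    (Finset.Icc_subset_Icc_left hab)) q

lemma Kv_gap (q : ℕ) (s : ℕ → ℕ) (hs : ∀ i, 1 ≤ i → i < q → 2 ≤ s i) {m : ℕ}
    (h1 : 1 ≤ m) (h2 : m < q) : Kv q s (m + 1) + 2 ≤ Kv q s m := by
  have hins : Finset.Icc m q = insert m (Finset.Icc (m + 1) q) := by
    ext x; simp [Finset.mem_Icc, Finset.mem_insert]; omega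
  have hnm : m ∉ Finset.Icc (m + 1) q := by simp
  have := hs m h1 h2
  unfold Kv
  rw [hins, Finset.sum_insert hnm]
  omega

lemma Kv_strict (q : ℕ) (s : ℕ → ℕ) (hs : ∀ i, 1 ≤ i → i < q → 2 ≤ s i) {a b : ℕ}
    (h1 : 1 ≤ a) (hab : a < b) (hbq : b ≤ q) : Kv q s b < Kv q s a := by
  have h2 : a < q := lt_of_lt_of_le hab hbq
  have hg := Kv_gap q s hs h1 h2
  have := Kv_anti q s (show a + 1 ≤ b by omega)
  omega

lemma card_Kv_le (q : ℕ) (s : ℕ → ℕ) (hs : ∀ i, 1 ≤ i → i < q → 2 ≤ s i) {a : ℕ}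
    (h1 : 1 ≤ a) (h2 : a ≤ q) :
    ((Finset.Icc 1 q).filter (fun m => Kv q s a ≤ Kv q s m)).card = a := by
  have : ((Finset.Icc 1 q).filter (fun m => Kv q s a ≤ Kv q s m)) = Finset.Icc 1 a := by
    ext m
    simp only [Finset.mem_filter, Finset.mem_Icc]
    constructor
    · rintro ⟨⟨hm1, hmq⟩, hK⟩
      refine ⟨hm1, ?_⟩
      by_contra h
      exact absurd hK (not_le.mpr (Kv_strict q s hs h1 (by omega) hmq))
    · rintro ⟨hm1, hma⟩
      exact ⟨⟨hm1, le_trans hma h2⟩, Kv_anti q s hma⟩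
  rw [this, Nat.card_Icc]; omega

lemma card_Kv_lt (q : ℕ) (s : ℕ → ℕ) (hs : ∀ i, 1 ≤ i → i < q → 2 ≤ s i) {a : ℕ}
    (h1 : 1 ≤ a) (h2 : a ≤ q) :
    ((Finset.Icc 1 q).filter (fun m => Kv q s a + 1 ≤ Kv q s m)).card = a - 1 := by
  have : ((Finset.Icc 1 q).filter (fun m => Kv q s a + 1 ≤ Kv q s m)) = Finset.Icc 1 (a - 1) := by
    ext m
    simp only [Finset.mem_filter, Finset.mem_Icc]
    constructor
    · rintro ⟨⟨hm1, hmq⟩, hK⟩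
      refine ⟨hm1, ?_⟩
      by_contra h
      have hma : a ≤ m := by omega
      have := Kv_anti q s hma
      omega
    · rintro ⟨hm1, hma⟩
      have hmq : m ≤ q := by omega
      have := Kv_strict q s hs hm1 (show m < a by omega) h2
      exact ⟨⟨hm1, hmq⟩, by omega⟩
  rw [this, Nat.card_Icc]; omega

lemma tail_getD (s : ℕ → ℕ) : ∀ (q t : ℕ),
    (((List.range q).reverse.flatMap fun j => List.replicate (s (j + 1)) (j + 1)).getD t 0)
      = ((Finset.Icc 1 q).filter fun m => t + 1 ≤ ∑ j ∈ Finset.Icc m q, s j).card := by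
  intro q
  induction q with
  | zero => intro t; simp
  | succ q ih =>
    intro t
    rw [List.range_succ, List.reverse_append]
    simp only [List.reverse_singleton, List.singleton_append, List.flatMap_cons]
    by_cases ht : t < s (q + 1)
    · rw [List.getD_append _ _ _ _ (by simpa using ht)]
      rw [List.getD_eq_getElem _ _ (by simpa using ht), List.getElem_replicate]
      have : ((Finset.Icc 1 (q + 1)).filter fun m => t + 1 ≤ ∑ j ∈ Finset.Icc m (q + 1), s j)
          = Finset.Icc 1 (q + 1) := by
        apply Finset.filter_true_of_mem
        intro m hm
        have hmem : q + 1 ∈ Finset.Icc m (q + 1) := by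
          simp only [Finset.mem_Icc] at hm ⊢; omega
        have := Finset.single_le_sum (f := s) (fun i _ => Nat.zero_le _) hmem
        omega
      rw [this, Nat.card_Icc]; omega
    · push_neg at ht
      rw [List.getD_append_right _ _ _ _ (by simpa using ht), List.length_replicate, ih]
      have hins : Finset.Icc 1 (q + 1) = insert (q + 1) (Finset.Icc 1 q) := by
        ext x; simp [Finset.mem_Icc, Finset.mem_insert]; omega
      rw [hins, Finset.filter_insert]
      have hfail : ¬ (t + 1 ≤ ∑ j ∈ Finset.Icc (q + 1) (q + 1), s j) := by
        simp only [Finset.Icc_self, Finset.sum_singleton]; omega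
      rw [if_neg hfail]
      congr 1
      apply Finset.filter_congr
      intro m hm
      simp only [Finset.mem_Icc] at hm
      rw [Finset.sum_Icc_succ_top (by omega : m ≤ q + 1)]
      constructor <;> intro h <;> simp at h ⊢ <;> omega

lemma stair_lt {q : ℕ} {s : ℕ → ℕ} {k : ℕ} (h1 : 1 ≤ k) (h2 : k ≤ q) :
    (stairSeq q s).getD (k - 1) 0 = k := by
  unfold stairSeq
  rw [List.getD_append _ _ _ _ (by simp; omega)]
  rw [List.getD_eq_getElem _ _ (by simp; omega)]
  simp
  omega

lemma stair_ge {q : ℕ} {s : ℕ → ℕ} {k : ℕ} (hq : 1 ≤ q) (hk : q ≤ k) :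
    (stairSeq q s).getD (k - 1) 0 = ((Finset.Icc 1 q).filter fun m => k ≤ Kv q s m).card := by
  rcases eq_or_lt_of_le hk with heq | hlt
  · rw [← heq, stair_lt hq le_rfl]
    have : ((Finset.Icc 1 q).filter fun m => q ≤ Kv q s m) = Finset.Icc 1 q :=
      Finset.filter_true_of_mem (fun m _ => Kv_ge q s m)
    rw [this, Nat.card_Icc]; omega
  · unfold stairSeq
    rw [List.getD_append_right _ _ _ _ (by simp; omega)]
    simp only [List.length_map, List.length_range]
    rw [tail_getD]
    congr 1
    apply Finset.filter_congr
    intro m _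
    unfold Kv
    constructor <;> intro h <;> simp at h ⊢ <;> omega

lemma part_eq_zero {γ : List ℕ} {i : ℕ} (h : γ.length < i) : part γ i = 0 := by
  unfold part
  exact List.getD_eq_default _ _ (by omega)

lemma sum_getD (γ : List ℕ) : ∑ j ∈ Finset.range γ.length, γ.getD j 0 = γ.sum := by
  induction γ with
  | nil => simp
  | cons a t ih =>
    simp only [List.length_cons, List.sum_cons]
    rw [Finset.sum_range_succ']
    simp only [List.getD_cons_succ, List.getD_cons_zero, ih]
    omega

lemma sum_part (γ : List ℕ) {M : ℕ} (hM : γ.length ≤ M) :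
    ∑ i ∈ Finset.Icc 1 M, part γ i = γ.sum := by
  have h1 : ∑ i ∈ Finset.Icc 1 M, part γ i = ∑ j ∈ Finset.range M, γ.getD j 0 := by
    rw [show Finset.Icc 1 M = Finset.Ico 1 (M+1) by ext x; simp [Finset.mem_Icc, Finset.mem_Ico]]
    rw [Finset.sum_Ico_eq_sum_range]
    simp only [part, Nat.add_sub_cancel]
    apply Finset.sum_congr rfl
    intro j _; congr 1; omega
  rw [h1, ← sum_getD γ]
  symm
  apply Finset.sum_subset (by intro x hx; simp at hx ⊢; omega)
  intro x _ hx
  simp only [Finset.mem_range, not_lt] at hx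
  exact List.getD_eq_default _ _ hx

lemma sum_diag_eq (γ : List ℕ) {M : ℕ} (hlen : γ.length ≤ M)
    (hM : ∀ i, 1 ≤ i → i ≤ γ.length → part γ i + i - 1 ≤ M) :
    ∑ k ∈ Finset.Icc 1 M, diag γ k = γ.sum := by
  have h1 : ∀ k ∈ Finset.Icc 1 M, diag γ k
      = ∑ i ∈ Finset.Icc 1 M, (if i ≤ k ∧ k ≤ part γ i + i - 1 then 1 else 0) := by
    intro k hk
    simp only [Finset.mem_Icc] at hk
    rw [diag]
    rw [show ((Finset.Icc 1 k).filter (fun i => k ≤ part γ i + i - 1))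
        = ((Finset.Icc 1 M).filter (fun i => i ≤ k ∧ k ≤ part γ i + i - 1)) by
      ext i; simp only [Finset.mem_filter, Finset.mem_Icc]; constructor
      · rintro ⟨⟨h1, h2⟩, h3⟩; exact ⟨⟨h1, by omega⟩, h2, h3⟩
      · rintro ⟨⟨h1, _⟩, h2, h3⟩; exact ⟨⟨h1, h2⟩, h3⟩]
    rw [Finset.card_filter]
  rw [Finset.sum_congr rfl h1, Finset.sum_comm]
  rw [← sum_part γ hlen]
  apply Finset.sum_congr rfl
  intro i hi
  simp only [Finset.mem_Icc] at hi
  rw [← Finset.card_filter]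
  rcases le_or_gt i γ.length with hil | hil
  · have hci : part γ i + i - 1 ≤ M := hM i hi.1 hil
    rw [show ((Finset.Icc 1 M).filter (fun k => i ≤ k ∧ k ≤ part γ i + i - 1))
        = Finset.Icc i (part γ i + i - 1) by
      ext k; simp only [Finset.mem_filter, Finset.mem_Icc]; omega]
    rw [Nat.card_Icc]
    omega
  · rw [part_eq_zero hil]
    convert Finset.card_empty
    ext k
    simp only [Finset.mem_filter, Finset.mem_Icc, Finset.notMem_empty, iff_false]
    omega

lemma length_abarList (q : ℕ) (s : ℕ → ℕ) : (abarList q s).length = q := by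
  simp [abarList]

lemma part_abarList (q : ℕ) (s : ℕ → ℕ) {i : ℕ} (h1 : 1 ≤ i) (h2 : i ≤ q) :
    part (abarList q s) i = abar q s i := by
  unfold part abarList
  rw [List.getD_eq_getElem _ _ (by simp; omega)]
  simp only [List.getElem_map, List.getElem_range]
  congr 1
  omega

lemma abar_add (q : ℕ) (s : ℕ → ℕ) {i : ℕ} (h1 : 1 ≤ i) (h2 : i ≤ q) :
    abar q s i + i - 1 = Kv q s i := by
  unfold abar Kv
  omega

lemma diag_abarList (q : ℕ) (s : ℕ → ℕ) (hq : 1 ≤ q) {k : ℕ} (hk : 1 ≤ k) :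
    diag (abarList q s) k = (stairSeq q s).getD (k - 1) 0 := by
  rcases le_or_gt k q with hkq | hkq
  · rw [stair_lt hk hkq, diag]
    rw [Finset.filter_true_of_mem, Nat.card_Icc]
    · omega
    · intro i hi
      simp only [Finset.mem_Icc] at hi
      rw [part_abarList q s hi.1 (le_trans hi.2 hkq), abar_add q s hi.1 (le_trans hi.2 hkq)]
      exact le_trans (le_trans hkq (Kv_ge q s i)) le_rfl
  · rw [stair_ge hq (le_of_lt hkq), diag]
    congr 1
    ext i
    simp only [Finset.mem_filter, Finset.mem_Icc]
    constructor
    · rintro ⟨⟨h1, h2⟩, h3⟩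
      rcases le_or_gt i q with hiq | hiq
      · rw [part_abarList q s h1 hiq, abar_add q s h1 hiq] at h3
        exact ⟨⟨h1, hiq⟩, h3⟩
      · rw [part_eq_zero (by rw [length_abarList]; omega)] at h3
        omega
    · rintro ⟨⟨h1, h2⟩, h3⟩
      rw [part_abarList q s h1 h2, abar_add q s h1 h2]
      have := Kv_ge q s i
      exact ⟨⟨h1, by omega⟩, h3⟩

lemma sorted_abarList (q : ℕ) (s : ℕ → ℕ) : (abarList q s).Pairwise (· ≥ ·) := by
  rw [List.pairwise_iff_getElem]
  intro i j hi hj hij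
  simp only [abarList, List.getElem_map, List.getElem_range]
  unfold abar
  have hsub := Finset.sum_le_sum_of_subset (f := s)
    (Finset.Icc_subset_Icc_left (b := q) (by omega : i + 1 ≤ j + 1))
  simp only [ge_iff_le]
  omega

lemma pos_abarList (q : ℕ) (s : ℕ → ℕ) : ∀ x ∈ abarList q s, 0 < x := by
  intro x hx
  simp only [abarList, List.mem_map, List.mem_range] at hx
  obtain ⟨j, hj, rfl⟩ := hx
  unfold abar
  omega

lemma part_anti {α : List ℕ} (hsort : α.Pairwise (· ≥ ·)) {i j : ℕ} (h1 : 1 ≤ i) (hij : i ≤ j) :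
    part α j ≤ part α i := by
  rcases eq_or_lt_of_le hij with rfl | hlt
  · exact le_rfl
  rcases le_or_gt j α.length with hjl | hjl
  · unfold part
    rw [List.getD_eq_getElem _ _ (by omega), List.getD_eq_getElem _ _ (by omega)]
    exact (List.pairwise_iff_getElem.mp hsort) (i - 1) (j - 1) (by omega) (by omega) (by omega)
  · rw [part_eq_zero hjl]
    exact Nat.zero_le _

lemma main_unique (q : ℕ) (s : ℕ → ℕ) (hq : 1 ≤ q) (hs : ∀ i, 1 ≤ i → i < q → 2 ≤ s i)
    (α : List ℕ) (hsort : α.Pairwise (· ≥ ·)) (hlen : α.length = q)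
    (hd : ∀ k, 1 ≤ k → diag α k = (stairSeq q s).getD (k - 1) 0) :
    α = abarList q s := by
  set c : ℕ → ℕ := fun i => part α i + i - 1 with hc
  -- c increases by at most 1
  have hmono : ∀ l, 1 ≤ l → c (l + 1) ≤ c l + 1 := by
    intro l hl
    have h := part_anti hsort hl (by omega : l ≤ l + 1)
    show part α (l + 1) + (l + 1) - 1 ≤ part α l + l - 1 + 1
    omega
  -- all first q diagonals are full
  have hq_full : ∀ i, 1 ≤ i → i ≤ q → q ≤ c i := by
    have hdq := hd q hq
    rw [stair_lt hq le_rfl, diag] at hdq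
    have heq : ((Finset.Icc 1 q).filter (fun i => q ≤ part α i + i - 1)) = Finset.Icc 1 q := by
      apply Finset.eq_of_subset_of_card_le (Finset.filter_subset _ _)
      rw [hdq, Nat.card_Icc]
      omega
    intro i h1 h2
    have : i ∈ ((Finset.Icc 1 q).filter (fun i => q ≤ part α i + i - 1)) := by
      rw [heq]; simp only [Finset.mem_Icc]; omega
    exact (Finset.mem_filter.mp this).2
  -- exact counts for all k ≥ q
  have hcount : ∀ k, q ≤ k →
      ((Finset.Icc 1 q).filter (fun i => k ≤ c i)).card
        = ((Finset.Icc 1 q).filter (fun m => k ≤ Kv q s m)).card := by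
    intro k hk
    have hdk := hd k (le_trans hq hk)
    rw [stair_ge hq hk, diag] at hdk
    rw [← hdk]
    congr 1
    ext i
    simp only [Finset.mem_filter, Finset.mem_Icc, hc]
    constructor
    · rintro ⟨⟨h1, h2⟩, h3⟩
      exact ⟨⟨h1, by omega⟩, h3⟩
    · rintro ⟨⟨h1, h2⟩, h3⟩
      rcases le_or_gt i q with hiq | hiq
      · exact ⟨⟨h1, hiq⟩, h3⟩
      · rw [part_eq_zero (by omega)] at h3
        omega
  have hA : ∀ a, 1 ≤ a → a ≤ q →
      ((Finset.Icc 1 q).filter (fun i => Kv q s a ≤ c i)).card = a := by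
    intro a h1 h2
    rw [hcount (Kv q s a) (Kv_ge q s a)]
    exact card_Kv_le q s hs h1 h2
  have hB : ∀ a, 1 ≤ a → a ≤ q →
      ((Finset.Icc 1 q).filter (fun i => Kv q s a + 1 ≤ c i)).card = a - 1 := by
    intro a h1 h2
    rw [hcount (Kv q s a + 1) (by have := Kv_ge q s a; omega)]
    exact card_Kv_lt q s hs h1 h2
  -- exactly one index with c i = Kv a
  have hone : ∀ a, 1 ≤ a → a ≤ q →
      ((Finset.Icc 1 q).filter (fun i => c i = Kv q s a)).card = 1 := by
    intro a h1 h2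
    have hsub : ((Finset.Icc 1 q).filter (fun i => Kv q s a + 1 ≤ c i))
        ⊆ ((Finset.Icc 1 q).filter (fun i => Kv q s a ≤ c i)) := by
      intro x hx
      simp only [Finset.mem_filter] at hx ⊢
      exact ⟨hx.1, by omega⟩
    have hsd : ((Finset.Icc 1 q).filter (fun i => c i = Kv q s a))
        = ((Finset.Icc 1 q).filter (fun i => Kv q s a ≤ c i))
          \ ((Finset.Icc 1 q).filter (fun i => Kv q s a + 1 ≤ c i)) := by
      ext x
      simp only [Finset.mem_filter, Finset.mem_sdiff, Finset.mem_Icc, not_and, not_le]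
      omega
    rw [hsd, Finset.card_sdiff_of_subset hsub, hA a h1 h2, hB a h1 h2]
    omega
  -- every c value is some Kv
  have himg : ∀ l, 1 ≤ l → l ≤ q → ∃ m, 1 ≤ m ∧ m ≤ q ∧ c l = Kv q s m := by
    intro l hl1 hlq
    have hallq : Kv q s q ≤ c l := by
      have heq : ((Finset.Icc 1 q).filter (fun i => Kv q s q ≤ c i)) = Finset.Icc 1 q := by
        apply Finset.eq_of_subset_of_card_le (Finset.filter_subset _ _)
        rw [hA q hq le_rfl, Nat.card_Icc]; omega
      have : l ∈ ((Finset.Icc 1 q).filter (fun i => Kv q s q ≤ c i)) := by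
        rw [heq]; simp only [Finset.mem_Icc]; omega
      exact (Finset.mem_filter.mp this).2
    set S := (Finset.Icc 1 q).filter (fun m => Kv q s m ≤ c l) with hS
    have hqS : q ∈ S := by
      simp only [hS, Finset.mem_filter, Finset.mem_Icc]
      exact ⟨⟨hq, le_rfl⟩, hallq⟩
    have hSne : S.Nonempty := ⟨q, hqS⟩
    set m := S.min' hSne with hm
    have hmS : m ∈ S := S.min'_mem hSne
    simp only [hS, Finset.mem_filter, Finset.mem_Icc] at hmS
    obtain ⟨⟨hm1, hmq⟩, hmle⟩ := hmS
    refine ⟨m, hm1, hmq, ?_⟩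
    by_contra hne
    have hgt : Kv q s m + 1 ≤ c l := by omega
    rcases eq_or_lt_of_le hm1 with h1 | h1
    · -- m = 1 : contradiction with count 0
      have h0 : ((Finset.Icc 1 q).filter (fun i => Kv q s 1 + 1 ≤ c i)) = ∅ :=
        Finset.card_eq_zero.mp (by simpa using hB 1 le_rfl hq)
      have hmem : l ∈ ((Finset.Icc 1 q).filter (fun i => Kv q s 1 + 1 ≤ c i)) := by
        simp only [Finset.mem_filter, Finset.mem_Icc]
        rw [← h1] at hgt
        exact ⟨⟨hl1, hlq⟩, hgt⟩
      rw [h0] at hmem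
      exact absurd hmem (Finset.notMem_empty l)
    · -- m ≥ 2
      have hm1' : 1 ≤ m - 1 := by omega
      have hmq' : m - 1 ≤ q := by omega
      have hnotS : (m - 1) ∉ S := by
        intro hcon
        have := S.min'_le _ hcon
        omega
      have hclt : c l < Kv q s (m - 1) := by
        by_contra hcon
        exact hnotS (by
          simp only [hS, Finset.mem_filter, Finset.mem_Icc]
          exact ⟨⟨hm1', hmq'⟩, by omega⟩)
      have hgap : Kv q s m + 2 ≤ Kv q s (m - 1) := by
        have := Kv_gap q s hs hm1' (by omega : m - 1 < q)
        rw [show m - 1 + 1 = m by omega] at this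
        exact this
      have hBsub : ((Finset.Icc 1 q).filter (fun i => Kv q s (m - 1) ≤ c i))
          ⊆ ((Finset.Icc 1 q).filter (fun i => Kv q s m + 1 ≤ c i)) := by
        intro x hx
        simp only [Finset.mem_filter] at hx ⊢
        exact ⟨hx.1, by omega⟩
      have hAB : ((Finset.Icc 1 q).filter (fun i => Kv q s (m - 1) ≤ c i))
          = ((Finset.Icc 1 q).filter (fun i => Kv q s m + 1 ≤ c i)) := by
        apply Finset.eq_of_subset_of_card_le hBsub
        rw [hA (m - 1) hm1' hmq', hB m hm1 hmq]
      have hlA : l ∈ ((Finset.Icc 1 q).filter (fun i => Kv q s m + 1 ≤ c i)) := by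
        simp only [Finset.mem_filter, Finset.mem_Icc]
        exact ⟨⟨hl1, hlq⟩, hgt⟩
      rw [← hAB] at hlA
      simp only [Finset.mem_filter] at hlA
      omega
  have hKc : ∀ i, 1 ≤ i → i ≤ q → c i = Kv q s i := by
    intro i
    induction i using Nat.strong_induction_on with
    | _ i IH =>
      intro hi1 hiq
      obtain ⟨m, hm1, hmq, hcm⟩ := himg i hi1 hiq
      rcases lt_trichotomy m i with hmi | rfl | hmi
      · exfalso
        have hcmm : c m = Kv q s m := IH m hmi hm1 hmq
        have hpair : ({i, m} : Finset ℕ) ⊆ (Finset.Icc 1 q).filter (fun l => c l = Kv q s m) := by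
          intro x hx
          simp only [Finset.mem_insert, Finset.mem_singleton] at hx
          rcases hx with rfl | rfl
          · simp only [Finset.mem_filter, Finset.mem_Icc]; exact ⟨⟨hi1, hiq⟩, hcm⟩
          · simp only [Finset.mem_filter, Finset.mem_Icc]; exact ⟨⟨hm1, hmq⟩, hcmm⟩
        have h2 : ({i, m} : Finset ℕ).card = 2 := by
          rw [Finset.card_insert_of_notMem (by simp; omega), Finset.card_singleton]
        have hle := Finset.card_le_card hpair
        rw [hone m hm1 hmq, h2] at hle
        omega
      · exact hcm
      · exfalso
        have hiq' : i < q := lt_of_lt_of_le hmi hmq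
        have hci_le : c i ≤ Kv q s (i + 1) := by
          rw [hcm]
          exact Kv_anti q s (by omega : i + 1 ≤ m)
        obtain ⟨j, hj⟩ := Finset.card_eq_one.mp (hone i hi1 hiq)
        have hjmem : j ∈ (Finset.Icc 1 q).filter (fun l => c l = Kv q s i) := by rw [hj]; simp
        simp only [Finset.mem_filter, Finset.mem_Icc] at hjmem
        obtain ⟨⟨hj1, hjq⟩, hcj⟩ := hjmem
        have hgapi := Kv_gap q s hs hi1 hiq'
        have hij : i < j := by
          rcases lt_trichotomy j i with hlt | rfl | hgt
          · have h1 := IH j hlt hj1 hjq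
            have h2 := Kv_strict q s hs hj1 hlt hiq
            omega
          · omega
          · exact hgt
        have hcross : ∀ l, i ≤ l → l ≤ j → c l ≤ Kv q s (i + 1) := by
          intro l hl
          induction l, hl using Nat.le_induction with
          | base => intro _; exact hci_le
          | succ l hl ihl =>
            intro hlj
            have hcl := ihl (by omega)
            have hstep := hmono l (by omega)
            obtain ⟨m', hm'1, hm'q, hcm'⟩ := himg (l + 1) (by omega) (by omega)
            have hlt : Kv q s m' < Kv q s i := by omega
            have him' : i < m' := by
              by_contra hcon
              have := Kv_anti q s (show m' ≤ i by omega)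
              omega
            have := Kv_anti q s (show i + 1 ≤ m' by omega)
            omega
        have := hcross j (le_of_lt hij) le_rfl
        omega
  apply List.ext_getElem (by rw [hlen, length_abarList])
  intro idx h1 h2
  have hiq : idx + 1 ≤ q := by rw [hlen] at h1; omega
  have hK : part α (idx + 1) + (idx + 1) - 1 = Kv q s (idx + 1) := hKc (idx + 1) (by omega) hiq
  have hgE : part α (idx + 1) = α[idx] := by
    unfold part
    simp only [Nat.add_sub_cancel]
    exact List.getD_eq_getElem _ _ h1
  have hgA : (abarList q s)[idx] = abar q s (idx + 1) := by
    simp [abarList]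
  rw [hgA, ← hgE]
  unfold abar
  unfold Kv at hK
  omega

lemma part_le_sum (γ : List ℕ) (i : ℕ) : part γ i ≤ γ.sum := by
  unfold part
  rcases lt_or_ge (i - 1) γ.length with h | h
  · rw [List.getD_eq_getElem _ _ h]
    exact List.single_le_sum (fun x _ => Nat.zero_le x) _ (List.getElem_mem h)
  · rw [List.getD_eq_default _ _ h]
    exact Nat.zero_le _


/-- Corollary 14(1): if `d = (1, …, q, q^{(s_q)}, …, 1^{(s_1)})` is the diagonal sequence of
some partition of `n` and `s_i ≥ 2` for all `1 ≤ i < q`, then exactly one partition of `n`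
with diagonal sequence `d` has exactly `q` nonzero parts. -/
theorem unique_partition_length_q (n q : ℕ) (hq : 1 ≤ q) (s : ℕ → ℕ)
    (hs : ∀ i, 1 ≤ i → i < q → 2 ≤ s i)
    (hex : ∃ β, IsPartition n β ∧ ∀ k, 1 ≤ k → diag β k = (stairSeq q s).getD (k - 1) 0) :
    ∃! α : List ℕ, IsPartition n α ∧
      (∀ k, 1 ≤ k → diag α k = (stairSeq q s).getD (k - 1) 0) ∧ α.length = q := by
  obtain ⟨β, ⟨hβsort, hβpos, hβsum⟩, hβdiag⟩ := hex
  set M := β.sum + β.length + (abarList q s).sum + q + 1 with hMdef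
  have hβbound : ∀ i, 1 ≤ i → i ≤ β.length → part β i + i - 1 ≤ M := by
    intro i h1 h2
    have := part_le_sum β i
    omega
  have habound : ∀ i, 1 ≤ i → i ≤ (abarList q s).length → part (abarList q s) i + i - 1 ≤ M := by
    intro i h1 h2
    have := part_le_sum (abarList q s) i
    rw [length_abarList] at h2
    omega
  have hsum1 := sum_diag_eq β (by omega) hβbound
  have hsum2 := sum_diag_eq (abarList q s) (by rw [length_abarList]; omega) habound
  have hsums : (abarList q s).sum = n := by
    rw [← hsum2, ← hβsum, ← hsum1]
    apply Finset.sum_congr rfl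
    intro k hk
    simp only [Finset.mem_Icc] at hk
    rw [diag_abarList q s hq hk.1, hβdiag k hk.1]
  refine ⟨abarList q s,
    ⟨⟨sorted_abarList q s, pos_abarList q s, hsums⟩,
      fun k hk => diag_abarList q s hq hk, length_abarList q s⟩, ?_⟩
  rintro α ⟨⟨hsort, _hpos, _hsumα⟩, hdiag, hlenα⟩
  exact main_unique q s hq hs α hsort hlenα hdiag
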